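/- arXiv:1804.09349 — 3 statements merged into one kernel-verified Lean document; each statement's English description precedes it below -/
import Mathlib

section
/- Let A : ℝ≥0 → ℝ^{r×r} be a continuous flow of matrices and let E_{s,t}(A) denote the associated state transition matrix, i.e., the solution of ∂_t E_{s,t}(A) = A_t E_{s,t}(A) with E_{s,s}(A) = Id. Then for all s ≤ t, log‖E_{s,t}(A)‖ ≤ ∫_s^t μ(A_u) du, where μ denotes the logarithmic norm (largest eigenvalue of the symmetric part). -/
open Matrix
open scoped Matrix.Norms.L2Operator

/-- The logarithmic norm: largest eigenvalue of the symmetric part `(A + Aᵀ)/2`. -/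
noncomputable def logNorm {r : ℕ} (A : Matrix (Fin r) (Fin r) ℝ) : ℝ :=
  (1 / 2) * ⨆ i, (Matrix.isHermitian_add_transpose_self A).eigenvalues i

section Aux

open scoped RealInnerProductSpace

variable {r : ℕ}

/-- Matrix action on Euclidean space. -/
noncomputable def mvE (M : Matrix (Fin r) (Fin r) ℝ) (x : EuclideanSpace ℝ (Fin r)) :
    EuclideanSpace ℝ (Fin r) := (EuclideanSpace.equiv (Fin r) ℝ).symm (M *ᵥ x)

lemma inner_mvE (M : Matrix (Fin r) (Fin r) ℝ) (x y : EuclideanSpace ℝ (Fin r)) :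
    ⟪mvE M x, y⟫ = (M *ᵥ x) ⬝ᵥ y := by
  simp [PiLp.inner_apply, dotProduct, mvE, mul_comm]

lemma mvE_symm (M : Matrix (Fin r) (Fin r) ℝ) (x y : EuclideanSpace ℝ (Fin r)) :
    ⟪mvE M x, y⟫ = ⟪x, mvE Mᵀ y⟫ := by
  rw [inner_mvE, real_inner_comm, inner_mvE, mulVec_transpose, dotProduct_comm,
    dotProduct_mulVec]

lemma mvE_add (M N : Matrix (Fin r) (Fin r) ℝ) (x : EuclideanSpace ℝ (Fin r)) :
    mvE (M + N) x = mvE M x + mvE N x := by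
  simp [mvE, add_mulVec]

lemma conjT_eq (M : Matrix (Fin r) (Fin r) ℝ) : Mᴴ = Mᵀ := rfl

lemma mvE_mul (M N : Matrix (Fin r) (Fin r) ℝ) (x : EuclideanSpace ℝ (Fin r)) :
    mvE (M * N) x = mvE M (mvE N x) := by
  unfold mvE; rw [← Matrix.mulVec_mulVec]; rfl

lemma mvE_one (x : EuclideanSpace ℝ (Fin r)) : mvE 1 x = x := by
  unfold mvE; rw [Matrix.one_mulVec]; rfl

lemma norm_mvE_le (M : Matrix (Fin r) (Fin r) ℝ) (x : EuclideanSpace ℝ (Fin r)) :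
    ‖mvE M x‖ ≤ ‖M‖ * ‖x‖ := M.l2_opNorm_mulVec x

lemma mvE_eigen {H : Matrix (Fin r) (Fin r) ℝ} (hH : H.IsHermitian) (j : Fin r) :
    mvE H (hH.eigenvectorBasis j) = hH.eigenvalues j • hH.eigenvectorBasis j := by
  have := hH.mulVec_eigenvectorBasis j
  unfold mvE; ext i; exact congrFun this i

lemma transpose_eq_self' {H : Matrix (Fin r) (Fin r) ℝ} (hH : H.IsHermitian) : Hᵀ = H := by
  simpa using hH.eq

lemma inner_mvE_basis {H : Matrix (Fin r) (Fin r) ℝ} (hH : H.IsHermitian)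
    (x : EuclideanSpace ℝ (Fin r)) (i : Fin r) :
    ⟪mvE H x, hH.eigenvectorBasis i⟫ = hH.eigenvalues i * ⟪x, hH.eigenvectorBasis i⟫ := by
  rw [mvE_symm, transpose_eq_self' hH, mvE_eigen hH i, real_inner_smul_right]

lemma rayleigh_le [NeZero r] {H : Matrix (Fin r) (Fin r) ℝ} (hH : H.IsHermitian)
    (x : EuclideanSpace ℝ (Fin r)) :
    ⟪mvE H x, x⟫ ≤ (⨆ i, hH.eigenvalues i) * ‖x‖ ^ 2 := by
  have key : ⟪mvE H x, x⟫
      = ∑ i, hH.eigenvalues i * (⟪x, hH.eigenvectorBasis i⟫ * ⟪hH.eigenvectorBasis i, x⟫) := by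
    rw [← hH.eigenvectorBasis.sum_inner_mul_inner (mvE H x) x]
    refine Finset.sum_congr rfl fun i _ => ?_
    rw [inner_mvE_basis hH x i]; ring
  rw [key]
  have hsum : ∑ i, (⟪x, hH.eigenvectorBasis i⟫ * ⟪hH.eigenvectorBasis i, x⟫) = ‖x‖ ^ 2 := by
    rw [hH.eigenvectorBasis.sum_inner_mul_inner x x, real_inner_self_eq_norm_sq]
  calc ∑ i, hH.eigenvalues i * (⟪x, hH.eigenvectorBasis i⟫ * ⟪hH.eigenvectorBasis i, x⟫)
      ≤ ∑ i, (⨆ j, hH.eigenvalues j) * (⟪x, hH.eigenvectorBasis i⟫ * ⟪hH.eigenvectorBasis i, x⟫) := by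
        refine Finset.sum_le_sum fun i _ => ?_
        have h1 : (0:ℝ) ≤ ⟪x, hH.eigenvectorBasis i⟫ * ⟪hH.eigenvectorBasis i, x⟫ := by
          rw [real_inner_comm x (hH.eigenvectorBasis i)]; exact mul_self_nonneg _
        exact mul_le_mul_of_nonneg_right (le_ciSup (Finite.bddAbove_range _) i) h1
    _ = (⨆ j, hH.eigenvalues j) * ‖x‖ ^ 2 := by rw [← Finset.mul_sum, hsum]

lemma rayleigh_exists [NeZero r] {H : Matrix (Fin r) (Fin r) ℝ} (hH : H.IsHermitian) :
    ∃ x : EuclideanSpace ℝ (Fin r), ‖x‖ = 1 ∧ ⟪mvE H x, x⟫ = ⨆ i, hH.eigenvalues i := by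
  obtain ⟨i, hi⟩ := Finite.exists_max hH.eigenvalues
  refine ⟨hH.eigenvectorBasis i, hH.eigenvectorBasis.orthonormal.1 i, ?_⟩
  rw [mvE_eigen hH i, real_inner_smul_left, real_inner_self_eq_norm_sq,
    hH.eigenvectorBasis.orthonormal.1 i]
  have : ⨆ j, hH.eigenvalues j = hH.eigenvalues i :=
    le_antisymm (ciSup_le hi) (le_ciSup (Finite.bddAbove_range _) i)
  rw [this]; ring

/-- key pointwise inequality: `⟪A x, x⟫ ≤ logNorm A * ‖x‖²`. -/
lemma inner_mvE_le_logNorm [NeZero r] (M : Matrix (Fin r) (Fin r) ℝ)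
    (x : EuclideanSpace ℝ (Fin r)) :
    ⟪mvE M x, x⟫ ≤ logNorm M * ‖x‖ ^ 2 := by
  have hH := Matrix.isHermitian_add_transpose_self M
  have h2 : 2 * ⟪mvE M x, x⟫ = ⟪mvE (M + Mᴴ) x, x⟫ := by
    rw [conjT_eq, mvE_add, inner_add_left]
    have : ⟪mvE Mᵀ x, x⟫ = ⟪mvE M x, x⟫ := by
      rw [mvE_symm, transpose_transpose, real_inner_comm]
    rw [this]; ring
  have := rayleigh_le hH x
  rw [← h2] at this
  have : ⟪mvE M x, x⟫ ≤ (1/2) * ((⨆ i, hH.eigenvalues i) * ‖x‖ ^ 2) := by linarith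
  calc ⟪mvE M x, x⟫ ≤ (1/2) * ((⨆ i, hH.eigenvalues i) * ‖x‖ ^ 2) := this
    _ = logNorm M * ‖x‖ ^ 2 := by rw [logNorm]; ring

lemma iSupEig_le_add [NeZero r] {M N : Matrix (Fin r) (Fin r) ℝ}
    (hM : M.IsHermitian) (hN : N.IsHermitian) :
    (⨆ i, hM.eigenvalues i) ≤ (⨆ i, hN.eigenvalues i) + ‖M - N‖ := by
  obtain ⟨x, hx1, hx⟩ := rayleigh_exists hM
  have hsplit : mvE M x = mvE N x + mvE (M - N) x := by
    rw [← mvE_add]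
    have : N + (M - N) = M := by abel
    rw [this]
  have h1 : ⟪mvE N x, x⟫ ≤ (⨆ i, hN.eigenvalues i) := by
    have := rayleigh_le hN x
    rwa [hx1, one_pow, mul_one] at this
  have h2 : ⟪mvE (M - N) x, x⟫ ≤ ‖M - N‖ := by
    calc ⟪mvE (M - N) x, x⟫ ≤ ‖mvE (M - N) x‖ * ‖x‖ := real_inner_le_norm _ _
      _ ≤ (‖M - N‖ * ‖x‖) * ‖x‖ :=
          mul_le_mul_of_nonneg_right (norm_mvE_le _ _) (norm_nonneg _)
      _ = ‖M - N‖ := by rw [hx1]; ring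
  have : ⟪mvE M x, x⟫ = ⟪mvE N x, x⟫ + ⟪mvE (M - N) x, x⟫ := by
    rw [hsplit, inner_add_left]
  linarith [hx ▸ this]

lemma logNorm_le_add [NeZero r] (M N : Matrix (Fin r) (Fin r) ℝ) :
    logNorm M ≤ logNorm N + ‖M - N‖ := by
  have key := iSupEig_le_add (Matrix.isHermitian_add_transpose_self M)
    (Matrix.isHermitian_add_transpose_self N)
  have hT : ‖Mᴴ - Nᴴ‖ = ‖M - N‖ := by
    rw [← Matrix.conjTranspose_sub, Matrix.l2_opNorm_conjTranspose]
  have hnorm : ‖(M + Mᴴ) - (N + Nᴴ)‖ ≤ 2 * ‖M - N‖ := by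
    have : (M + Mᴴ) - (N + Nᴴ) = (M - N) + (Mᴴ - Nᴴ) := by abel
    rw [this]
    calc ‖(M - N) + (Mᴴ - Nᴴ)‖ ≤ ‖M - N‖ + ‖Mᴴ - Nᴴ‖ := norm_add_le _ _
      _ = 2 * ‖M - N‖ := by rw [hT]; ring
  rw [logNorm, logNorm]
  nlinarith [key, hnorm]

lemma continuous_logNorm [NeZero r] {A : ℝ → Matrix (Fin r) (Fin r) ℝ} (hA : Continuous A) :
    Continuous fun t => logNorm (A t) := by
  have hlip : LipschitzWith 1 (logNorm (r := r)) := by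
    refine LipschitzWith.of_dist_le_mul fun M N => ?_
    rw [Real.dist_eq, dist_eq_norm, NNReal.coe_one, one_mul, abs_sub_le_iff]
    constructor
    · linarith [logNorm_le_add M N]
    · have := logNorm_le_add N M
      rw [show N - M = -(M - N) by abel, norm_neg] at this
      linarith
  exact hlip.continuous.comp hA

/-- The linear action `M ↦ M *ᵥ x` as a continuous linear map. -/
noncomputable def mvECLM (x : EuclideanSpace ℝ (Fin r)) :
    Matrix (Fin r) (Fin r) ℝ →L[ℝ] EuclideanSpace ℝ (Fin r) :=
  LinearMap.toContinuousLinearMap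
    { toFun := fun M => mvE M x
      map_add' := fun M N => mvE_add M N x
      map_smul' := fun c M => by
        ext i
        simp [mvE, Matrix.smul_mulVec] }

lemma mvECLM_apply (x : EuclideanSpace ℝ (Fin r)) (M : Matrix (Fin r) (Fin r) ℝ) :
    mvECLM x M = mvE M x := rfl

lemma l2_opNorm_le_bound {M : Matrix (Fin r) (Fin r) ℝ} {K : ℝ} (hK : 0 ≤ K)
    (h : ∀ x : EuclideanSpace ℝ (Fin r), ‖mvE M x‖ ≤ K * ‖x‖) : ‖M‖ ≤ K := by
  rw [Matrix.l2_opNorm_def]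
  exact ContinuousLinearMap.opNorm_le_bound _ hK fun x => h x

/-- Gronwall: decreasing version. -/
lemma gronwall_upper {f f' c G : ℝ → ℝ}
    (hf : ∀ u, HasDerivAt f (f' u) u) (hG : ∀ u, HasDerivAt G (c u) u)
    (hfc : ∀ u, f' u ≤ 2 * c u * f u) {s t : ℝ} (hst : s ≤ t) :
    Real.exp (-2 * G t) * f t ≤ Real.exp (-2 * G s) * f s := by
  set φ := fun u => Real.exp (-2 * G u) * f u with hφ
  have hd : ∀ u, HasDerivAt φ
      (Real.exp (-2 * G u) * (-2 * c u) * f u + Real.exp (-2 * G u) * f' u) u := by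
    intro u
    exact (((hG u).const_mul (-2)).exp).mul (hf u)
  have : Antitone φ := by
    refine antitone_of_deriv_nonpos (fun u => (hd u).differentiableAt) fun u => ?_
    rw [(hd u).deriv]
    have h1 := hfc u
    have h2 : (0:ℝ) < Real.exp (-2 * G u) := Real.exp_pos _
    nlinarith
  exact this hst

/-- Gronwall: increasing version. -/
lemma gronwall_lower {f f' c G : ℝ → ℝ}
    (hf : ∀ u, HasDerivAt f (f' u) u) (hG : ∀ u, HasDerivAt G (c u) u)
    (hfc : ∀ u, -(2 * c u * f u) ≤ f' u) {s t : ℝ} (hst : s ≤ t) :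
    Real.exp (2 * G s) * f s ≤ Real.exp (2 * G t) * f t := by
  set φ := fun u => Real.exp (2 * G u) * f u with hφ
  have hd : ∀ u, HasDerivAt φ
      (Real.exp (2 * G u) * (2 * c u) * f u + Real.exp (2 * G u) * f' u) u := by
    intro u
    exact (((hG u).const_mul 2).exp).mul (hf u)
  have : Monotone φ := by
    refine monotone_of_deriv_nonneg (fun u => (hd u).differentiableAt) fun u => ?_
    rw [(hd u).deriv]
    have h1 := hfc u
    have h2 : (0:ℝ) < Real.exp (2 * G u) := Real.exp_pos _
    nlinarith
  exact this hst

lemma hasDerivAt_normsq (A : ℝ → Matrix (Fin r) (Fin r) ℝ)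
    (E : ℝ → ℝ → Matrix (Fin r) (Fin r) ℝ)
    (hE : ∀ s t, HasDerivAt (fun u => E s u) (A t * E s t) t)
    (s : ℝ) (x : EuclideanSpace ℝ (Fin r)) (u : ℝ) :
    HasDerivAt (fun u => ‖mvE (E s u) x‖ ^ 2)
      (2 * ⟪mvE (A u) (mvE (E s u) x), mvE (E s u) x⟫) u := by
  have hv : HasDerivAt (fun u => mvE (E s u) x) (mvE (A u * E s u) x) u := by
    have := ((mvECLM x).hasFDerivAt (x := E s u)).comp_hasDerivAt u (hE s u)
    exact this
  have h2 := hv.inner ℝ hv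
  have heq : (fun u => ⟪mvE (E s u) x, mvE (E s u) x⟫) = fun u => ‖mvE (E s u) x‖ ^ 2 := by
    funext u; rw [real_inner_self_eq_norm_sq]
  rw [heq] at h2
  refine h2.congr_deriv ?_
  rw [mvE_mul, real_inner_comm (mvE (A u) (mvE (E s u) x)) (mvE (E s u) x)]
  ring

lemma norm_transition_le [NeZero r] (A : ℝ → Matrix (Fin r) (Fin r) ℝ) (hA : Continuous A)
    (E : ℝ → ℝ → Matrix (Fin r) (Fin r) ℝ)
    (hE0 : ∀ s, E s s = 1)
    (hE : ∀ s t, HasDerivAt (fun u => E s u) (A t * E s t) t)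
    (s t : ℝ) (hst : s ≤ t) :
    ‖E s t‖ ≤ Real.exp (∫ u in s..t, logNorm (A u)) := by
  have hc : Continuous fun u => logNorm (A u) := continuous_logNorm hA
  have hG : ∀ u, HasDerivAt (fun w => ∫ τ in s..w, logNorm (A τ)) (logNorm (A u)) u := fun u =>
    intervalIntegral.integral_hasDerivAt_right (hc.intervalIntegrable s u)
      (hc.stronglyMeasurableAtFilter _ _) hc.continuousAt
  refine l2_opNorm_le_bound (Real.exp_nonneg _) fun x => ?_
  have hf := hasDerivAt_normsq A E hE s x
  have hfc : ∀ u, 2 * ⟪mvE (A u) (mvE (E s u) x), mvE (E s u) x⟫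
      ≤ 2 * logNorm (A u) * ‖mvE (E s u) x‖ ^ 2 := fun u => by
    have := inner_mvE_le_logNorm (A u) (mvE (E s u) x)
    nlinarith
  have hgr := gronwall_upper hf hG hfc hst
  have hGs : (∫ τ in s..s, logNorm (A τ)) = 0 := intervalIntegral.integral_same
  have hfs : ‖mvE (E s s) x‖ ^ 2 = ‖x‖ ^ 2 := by rw [hE0, mvE_one]
  rw [hGs, hfs] at hgr
  set Gt := ∫ τ in s..t, logNorm (A τ) with hGt
  have e1 : Real.exp (-2 * Gt) * ‖mvE (E s t) x‖ ^ 2 ≤ ‖x‖ ^ 2 := by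
    simpa using hgr
  have h4 : Real.exp (-2 * Gt) * (Real.exp Gt) ^ 2 = 1 := by
    rw [sq, ← Real.exp_add, ← Real.exp_add, show -2 * Gt + (Gt + Gt) = 0 by ring,
      Real.exp_zero]
  have h5 : ‖mvE (E s t) x‖ ^ 2 ≤ (Real.exp Gt * ‖x‖) ^ 2 := by
    have hp := Real.exp_pos (-2 * Gt)
    have hq := Real.exp_pos Gt
    nlinarith [e1, h4]
  exact (pow_le_pow_iff_left₀ (norm_nonneg _) (by positivity) two_ne_zero).mp h5

lemma transition_pos [NeZero r] (A : ℝ → Matrix (Fin r) (Fin r) ℝ) (hA : Continuous A)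
    (E : ℝ → ℝ → Matrix (Fin r) (Fin r) ℝ)
    (hE0 : ∀ s, E s s = 1)
    (hE : ∀ s t, HasDerivAt (fun u => E s u) (A t * E s t) t)
    (s t : ℝ) (hst : s ≤ t) :
    0 < ‖E s t‖ := by
  have i0 : Fin r := ⟨0, Nat.pos_of_ne_zero (NeZero.ne r)⟩
  set x : EuclideanSpace ℝ (Fin r) := EuclideanSpace.single i0 1 with hx_def
  have hx : ‖x‖ = 1 := by rw [hx_def, EuclideanSpace.norm_single, norm_one]
  have hC : Continuous fun u => ‖A u‖ := hA.norm
  have hG : ∀ u, HasDerivAt (fun w => ∫ τ in s..w, ‖A τ‖) ‖A u‖ u := fun u =>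
    intervalIntegral.integral_hasDerivAt_right (hC.intervalIntegrable s u)
      (hC.stronglyMeasurableAtFilter _ _) hC.continuousAt
  have hf := hasDerivAt_normsq A E hE s x
  have hfc : ∀ u, -(2 * ‖A u‖ * ‖mvE (E s u) x‖ ^ 2)
      ≤ 2 * ⟪mvE (A u) (mvE (E s u) x), mvE (E s u) x⟫ := fun u => by
    have h1 := abs_real_inner_le_norm (mvE (A u) (mvE (E s u) x)) (mvE (E s u) x)
    have h2 := norm_mvE_le (A u) (mvE (E s u) x)
    have h3 := norm_nonneg (mvE (E s u) x)
    have h4 := neg_abs_le ⟪mvE (A u) (mvE (E s u) x), mvE (E s u) x⟫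
    nlinarith
  have hgr := gronwall_lower hf hG hfc hst
  have hGs : (∫ τ in s..s, ‖A τ‖) = 0 := intervalIntegral.integral_same
  have hfs : ‖mvE (E s s) x‖ ^ 2 = 1 := by rw [hE0, mvE_one, hx, one_pow]
  rw [hGs, hfs] at hgr
  have hpos : 0 < ‖mvE (E s t) x‖ ^ 2 := by
    have h1 := Real.exp_pos (2 * (0:ℝ))
    have h2 := Real.exp_pos (2 * ∫ τ in s..t, ‖A τ‖)
    nlinarith
  have h5 : 0 < ‖mvE (E s t) x‖ := by
    by_contra h
    push_neg at h
    have : ‖mvE (E s t) x‖ = 0 := le_antisymm h (norm_nonneg _)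
    rw [this] at hpos; norm_num at hpos
  have h6 : ‖mvE (E s t) x‖ ≤ ‖E s t‖ := by
    have := norm_mvE_le (E s t) x
    rwa [hx, mul_one] at this
  exact lt_of_lt_of_le h5 h6

end Aux

/-- if `E s t` is the state transition matrix of the continuous flow `A`
(`∂ₜ E s t = A t * E s t`, `E s s = 1`), then for `s ≤ t`,
`log ‖E s t‖ ≤ ∫ₛᵗ μ(A u) du`, where `μ` is the logarithmic norm and `‖·‖`
the spectral norm. -/
theorem log_norm_transition_le_integral_logNorm {r : ℕ} [NeZero r]
    (A : ℝ → Matrix (Fin r) (Fin r) ℝ) (hA : Continuous A)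
    (E : ℝ → ℝ → Matrix (Fin r) (Fin r) ℝ)
    (hE0 : ∀ s, E s s = 1)
    (hE : ∀ s t, HasDerivAt (fun u => E s u) (A t * E s t) t) :
    ∀ s t : ℝ, s ≤ t → Real.log ‖E s t‖ ≤ ∫ u in s..t, logNorm (A u) := by
  intro s t hst
  exact (Real.log_le_iff_le_exp (transition_pos A hA E hE0 hE s t hst)).mpr
    (norm_transition_le A hA E hE0 hE s t hst)
end

section
/- Suppose A : ℝ≥0 → ℝ^{r×r} satisfies ‖A_t − A_∞‖ ≤ a e^{−bt} for some matrix A_∞ with μ(A_∞) < 0, some a < ∞ and b > 0. Then for all s, t > 0, (1/t) log‖E_{s,s+t}(A)‖ ≤ μ(A_∞) + (a/b)·e^{−bs}/t. -/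
open Matrix
open scoped Matrix.Norms.L2Operator

/-- Rayleigh quotient bound: the quadratic form of a Hermitian matrix is bounded by its
largest eigenvalue. -/
lemma rayleigh_aux {r : ℕ} {M : Matrix (Fin r) (Fin r) ℝ} (hM : M.IsHermitian)
    (x : Fin r → ℝ) :
    x ⬝ᵥ (M *ᵥ x) ≤ (⨆ i, hM.eigenvalues i) * (x ⬝ᵥ x) := by
  classical
  set c := ⨆ i, hM.eigenvalues i with hc
  have hev : ∀ i, hM.eigenvalues i ≤ c := fun i =>
    le_ciSup (Set.Finite.bddAbove (Set.finite_range _)) i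
  set U : Matrix (Fin r) (Fin r) ℝ := (hM.eigenvectorUnitary : Matrix (Fin r) (Fin r) ℝ) with hUdef
  have hU : U * star U = 1 := Matrix.mem_unitaryGroup_iff.mp hM.eigenvectorUnitary.2
  have hdiag : Matrix.diagonal (RCLike.ofReal ∘ hM.eigenvalues) =
      Matrix.diagonal hM.eigenvalues := by
    congr 1
  have hdecomp : c • (1 : Matrix (Fin r) (Fin r) ℝ) - M =
      U * Matrix.diagonal (fun i => c - hM.eigenvalues i) * star U := by
    conv_lhs => rw [hM.spectral_theorem, Unitary.conjStarAlgAut_apply, hdiag]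
    have h1 : Matrix.diagonal (fun i => c - hM.eigenvalues i) =
        c • (1 : Matrix (Fin r) (Fin r) ℝ) - Matrix.diagonal hM.eigenvalues := by
      rw [Matrix.smul_one_eq_diagonal, ← Matrix.diagonal_sub]
    rw [h1, Matrix.mul_sub, Matrix.sub_mul, Matrix.mul_smul, mul_one, Matrix.smul_mul, hU]
  have hpsd : (c • (1 : Matrix (Fin r) (Fin r) ℝ) - M).PosSemidef := by
    rw [hdecomp]
    have : (Matrix.diagonal (fun i => c - hM.eigenvalues i)).PosSemidef :=
      Matrix.posSemidef_diagonal_iff.mpr (fun i => sub_nonneg.mpr (hev i))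
    simpa [Matrix.star_eq_conjTranspose] using this.mul_mul_conjTranspose_same U
  have h0 := hpsd.re_dotProduct_nonneg x
  simp only [RCLike.re_to_real, star_trivial, Matrix.sub_mulVec, Matrix.smul_mulVec,
    Matrix.one_mulVec, dotProduct_sub, dotProduct_smul, smul_eq_mul] at h0
  linarith

lemma dot_sq {r : ℕ} (x : Fin r → ℝ) :
    x ⬝ᵥ x = ‖(WithLp.equiv 2 (Fin r → ℝ)).symm x‖ ^ 2 := by
  rw [← real_inner_self_eq_norm_sq]
  simp [PiLp.inner_apply, dotProduct]
  rw [EuclideanSpace.norm_eq, Real.sq_sqrt (by positivity)]; simp [sq]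

/-- Cauchy–Schwarz bound for the quadratic form of an arbitrary matrix, in terms of the
L2 operator norm. -/
lemma quad_abs_le {r : ℕ} (M : Matrix (Fin r) (Fin r) ℝ) (x : Fin r → ℝ) :
    |x ⬝ᵥ (M *ᵥ x)| ≤ ‖M‖ * (x ⬝ᵥ x) := by
  set x' : EuclideanSpace ℝ (Fin r) := (WithLp.equiv 2 (Fin r → ℝ)).symm x with hx'
  have h1 : x ⬝ᵥ (M *ᵥ x) = inner ℝ x' ((WithLp.equiv 2 (Fin r → ℝ)).symm (M *ᵥ x)) := by
    simp [PiLp.inner_apply, dotProduct, hx', mul_comm]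
  have h2 : |inner ℝ x' ((WithLp.equiv 2 (Fin r → ℝ)).symm (M *ᵥ x))|
      ≤ ‖x'‖ * ‖(WithLp.equiv 2 (Fin r → ℝ)).symm (M *ᵥ x)‖ := abs_real_inner_le_norm _ _
  have h3 : ‖(WithLp.equiv 2 (Fin r → ℝ)).symm (M *ᵥ x)‖ ≤ ‖M‖ * ‖x'‖ := by
    have := M.l2_opNorm_mulVec x'
    simpa [hx'] using this
  have hx : x ⬝ᵥ x = ‖x'‖ ^ 2 := dot_sq x
  calc |x ⬝ᵥ (M *ᵥ x)| ≤ ‖x'‖ * (‖M‖ * ‖x'‖) := by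
        rw [h1]; exact h2.trans (by gcongr)
    _ = ‖M‖ * (x ⬝ᵥ x) := by rw [hx]; ring

/-- An elementary Grönwall-type comparison lemma. -/
lemma gronwall_aux (φ g φ' g' : ℝ → ℝ) (s T : ℝ) (hsT : s ≤ T)
    (hφ : ∀ u ∈ Set.Icc s T, HasDerivAt φ (φ' u) u)
    (hg : ∀ u ∈ Set.Icc s T, HasDerivAt g (g' u) u)
    (hle : ∀ u ∈ Set.Icc s T, φ' u ≤ g' u * φ u) :
    φ T * Real.exp (-g T) ≤ φ s * Real.exp (-g s) := by
  set ψ : ℝ → ℝ := fun u => φ u * Real.exp (-g u) with hψ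
  have hd : ∀ u ∈ Set.Icc s T,
      HasDerivAt ψ ((φ' u - g' u * φ u) * Real.exp (-g u)) u := by
    intro u hu
    have := (hφ u hu).mul (((hg u hu).neg).exp)
    exact this.congr_deriv (by simp only [Pi.neg_apply]; ring)
  have hanti : AntitoneOn ψ (Set.Icc s T) := by
    apply antitoneOn_of_deriv_nonpos (convex_Icc s T)
    · exact fun u hu => ((hd u hu).continuousAt).continuousWithinAt
    · intro u hu
      rw [interior_Icc] at hu
      exact ((hd u (Set.mem_Icc_of_Ioo hu)).differentiableAt).differentiableWithinAt
    · intro u hu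
      rw [interior_Icc] at hu
      have hu' : u ∈ Set.Icc s T := Set.mem_Icc_of_Ioo hu
      rw [(hd u hu').deriv]
      have h := hle u hu'
      nlinarith [Real.exp_pos (-g u)]
  exact hanti (Set.left_mem_Icc.mpr hsT) (Set.right_mem_Icc.mpr hsT) hsT

/-- `M ↦ M *ᵥ x` as a continuous linear map (w.r.t. the L2 operator norm). -/
noncomputable def mulVecCLM {r : ℕ} (x : Fin r → ℝ) :
    Matrix (Fin r) (Fin r) ℝ →L[ℝ] (Fin r → ℝ) :=
  LinearMap.toContinuousLinearMap
    { toFun := fun M => M *ᵥ x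
      map_add' := fun M N => Matrix.add_mulVec M N x
      map_smul' := fun c M => Matrix.smul_mulVec c M x }

@[simp] lemma mulVecCLM_apply {r : ℕ} (x : Fin r → ℝ) (M : Matrix (Fin r) (Fin r) ℝ) :
    mulVecCLM x M = M *ᵥ x := rfl

lemma hasDerivAt_dot {r : ℕ} (E : ℝ → Matrix (Fin r) (Fin r) ℝ)
    (E' : Matrix (Fin r) (Fin r) ℝ) (u : ℝ) (h : HasDerivAt E E' u) (x : Fin r → ℝ) :
    HasDerivAt (fun v => (E v *ᵥ x) ⬝ᵥ (E v *ᵥ x))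
      (2 * ((E' *ᵥ x) ⬝ᵥ (E u *ᵥ x))) u := by
  have hj : ∀ j : Fin r, HasDerivAt (fun v => (E v *ᵥ x) j) ((E' *ᵥ x) j) u := by
    intro j
    have := ((ContinuousLinearMap.proj (R := ℝ) (φ := fun _ : Fin r => ℝ) j).comp
      (mulVecCLM x)).hasFDerivAt.comp_hasDerivAt u h
    exact this
  have hsum : HasDerivAt (fun v => ∑ j, (E v *ᵥ x) j * (E v *ᵥ x) j)
      (∑ j, ((E' *ᵥ x) j * (E u *ᵥ x) j + (E u *ᵥ x) j * (E' *ᵥ x) j)) u :=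
    HasDerivAt.fun_sum (fun j _ => (hj j).mul (hj j))
  have heq : (∑ j, ((E' *ᵥ x) j * (E u *ᵥ x) j + (E u *ᵥ x) j * (E' *ᵥ x) j))
      = 2 * ((E' *ᵥ x) ⬝ᵥ (E u *ᵥ x)) := by
    simp only [dotProduct, Finset.mul_sum]
    apply Finset.sum_congr rfl
    intro j _
    ring
  rw [← heq]
  exact hsum

/-- under hypothesis (H₀), i.e. `‖A_t − A_∞‖ ≤ a e^{−bt}` with
`μ(A_∞) < 0` and `b > 0`, the state transition matrix satisfies, for all `s, t > 0`,
`(1/t) log ‖E_{s,s+t}(A)‖ ≤ μ(A_∞) + (a/b) e^{−bs}/t`. -/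
theorem transition_log_norm_bound_of_exponentially_stable_flow {r : ℕ} [NeZero r]
    (A : ℝ → Matrix (Fin r) (Fin r) ℝ) (Ainf : Matrix (Fin r) (Fin r) ℝ)
    (a b : ℝ) (hb : 0 < b) (hmu : logNorm Ainf < 0)
    (hA : ∀ t : ℝ, 0 ≤ t → ‖A t - Ainf‖ ≤ a * Real.exp (-b * t))
    (E : ℝ → ℝ → Matrix (Fin r) (Fin r) ℝ)
    (hE0 : ∀ s, E s s = 1)
    (hE : ∀ s t, HasDerivAt (fun u => E s u) (A t * E s t) t) :
    ∀ s t : ℝ, 0 < s → 0 < t →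
      (1 / t) * Real.log ‖E s (s + t)‖ ≤
        logNorm Ainf + (a / b) * Real.exp (-b * s) / t := by
  intro s t hs ht
  set μ := logNorm Ainf with hμdef
  have ha : 0 ≤ a := by
    have h := hA 0 le_rfl
    simp only [mul_zero, Real.exp_zero, mul_one] at h
    exact (norm_nonneg (A 0 - Ainf)).trans h
  set K := μ * t + (a / b) * Real.exp (-b * s) with hK
  -- derivative of the squared norm of `E s · *ᵥ x`
  have hφderiv : ∀ (x : Fin r → ℝ) (u : ℝ),
      HasDerivAt (fun v => (E s v *ᵥ x) ⬝ᵥ (E s v *ᵥ x))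
        (2 * ((A u *ᵥ (E s u *ᵥ x)) ⬝ᵥ (E s u *ᵥ x))) u := by
    intro x u
    have := hasDerivAt_dot (fun v => E s v) (A u * E s u) u (hE s u) x
    convert this using 2
    rw [Matrix.mulVec_mulVec]
  -- dot products are nonneg
  have hdotnn : ∀ y : Fin r → ℝ, 0 ≤ y ⬝ᵥ y :=
    fun y => Finset.sum_nonneg fun i _ => mul_self_nonneg _
  -- Grönwall upper estimate for every vector x
  have key : ∀ x : Fin r → ℝ,
      (E s (s+t) *ᵥ x) ⬝ᵥ (E s (s+t) *ᵥ x) ≤ (x ⬝ᵥ x) * Real.exp (2 * K) := by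
    intro x
    set φ : ℝ → ℝ := fun v => (E s v *ᵥ x) ⬝ᵥ (E s v *ᵥ x) with hφdef
    set φ' : ℝ → ℝ := fun u => 2 * ((A u *ᵥ (E s u *ᵥ x)) ⬝ᵥ (E s u *ᵥ x)) with hφ'def
    set g : ℝ → ℝ := fun v => 2*μ*v - (2*a/b) * Real.exp (-b*v) with hgdef
    set g' : ℝ → ℝ := fun u => 2*μ + 2*(a * Real.exp (-b*u)) with hg'def
    have hg : ∀ u : ℝ, HasDerivAt g (g' u) u := by
      intro u
      have h1 : HasDerivAt (fun v : ℝ => 2*μ*v) (2*μ) u := by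
        simpa using (hasDerivAt_id u).const_mul (2*μ)
      have h2 : HasDerivAt (fun v : ℝ => Real.exp (-b*v)) (Real.exp (-b*u) * (-b)) u := by
        have hlin : HasDerivAt (fun v : ℝ => -b*v) (-b) u := by
          simpa using (hasDerivAt_id u).const_mul (-b)
        exact hlin.exp
      have := h1.sub (h2.const_mul (2*a/b))
      exact this.congr_deriv (by simp only [hg'def]; field_simp; ring)
    have hle : ∀ u ∈ Set.Icc s (s+t), φ' u ≤ g' u * φ u := by
      intro u hu
      have hu0 : (0:ℝ) ≤ u := le_trans hs.le hu.1
      set y := E s u *ᵥ x with hy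
      have hyy : 0 ≤ y ⬝ᵥ y := hdotnn y
      have hsplit : A u *ᵥ y = Ainf *ᵥ y + (A u - Ainf) *ᵥ y := by
        rw [Matrix.sub_mulVec]
        abel
      have h1 : y ⬝ᵥ (Ainf *ᵥ y) ≤ μ * (y ⬝ᵥ y) := by
        have hray := rayleigh_aux (Matrix.isHermitian_add_transpose_self Ainf) y
        have htr : y ⬝ᵥ ((Ainf + Ainfᴴ) *ᵥ y) = 2 * (y ⬝ᵥ (Ainf *ᵥ y)) := by
          rw [show Ainfᴴ = Ainfᵀ from rfl]
          rw [Matrix.add_mulVec, dotProduct_add, Matrix.dotProduct_mulVec y Ainfᵀ,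
            Matrix.vecMul_transpose, dotProduct_comm (Ainf *ᵥ y) y]
          ring
        rw [htr] at hray
        have hμeq : μ = (1/2) * ⨆ i,
            (Matrix.isHermitian_add_transpose_self Ainf).eigenvalues i := rfl
        rw [hμeq]
        linarith
      have h2 : y ⬝ᵥ ((A u - Ainf) *ᵥ y) ≤ (a * Real.exp (-b*u)) * (y ⬝ᵥ y) := by
        calc y ⬝ᵥ ((A u - Ainf) *ᵥ y) ≤ |y ⬝ᵥ ((A u - Ainf) *ᵥ y)| := le_abs_self _
          _ ≤ ‖A u - Ainf‖ * (y ⬝ᵥ y) := quad_abs_le _ _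
          _ ≤ (a * Real.exp (-b*u)) * (y ⬝ᵥ y) :=
              mul_le_mul_of_nonneg_right (hA u hu0) hyy
      have hcomm : (A u *ᵥ y) ⬝ᵥ y = y ⬝ᵥ (A u *ᵥ y) := dotProduct_comm _ _
      have hexp : φ' u = 2 * (y ⬝ᵥ (A u *ᵥ y)) := by
        rw [hφ'def]
        simp only [← hy, hcomm]
      have hg'u : g' u = 2*μ + 2*(a * Real.exp (-b*u)) := rfl
      have hyA : y ⬝ᵥ (A u *ᵥ y) = y ⬝ᵥ (Ainf *ᵥ y) + y ⬝ᵥ ((A u - Ainf) *ᵥ y) := by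
        rw [hsplit, dotProduct_add]
      have hφu : φ u = y ⬝ᵥ y := rfl
      rw [hexp, hg'u, hφu, hyA]
      linarith
    have hgr := gronwall_aux φ g φ' g' s (s+t) (by linarith)
      (fun u _ => hφderiv x u) (fun u _ => hg u) hle
    have hφs : φ s = x ⬝ᵥ x := by
      simp [hφdef, hE0 s, Matrix.one_mulVec]
    have hmono : φ (s+t) ≤ (x ⬝ᵥ x) * Real.exp (g (s+t) - g s) := by
      have he1 : Real.exp (-g (s+t)) * Real.exp (g (s+t)) = 1 := by
        rw [← Real.exp_add]; simp
      have he2 := Real.exp_pos (g (s+t))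
      have := mul_le_mul_of_nonneg_right hgr (Real.exp_pos (g (s+t))).le
      calc φ (s+t) = φ (s+t) * (Real.exp (-g (s+t)) * Real.exp (g (s+t))) := by
            rw [he1, mul_one]
        _ = φ (s+t) * Real.exp (-g (s+t)) * Real.exp (g (s+t)) := by ring
        _ ≤ φ s * Real.exp (-g s) * Real.exp (g (s+t)) := this
        _ = (x ⬝ᵥ x) * Real.exp (g (s+t) - g s) := by
            rw [hφs, mul_assoc, ← Real.exp_add]
            congr 2
            ring
    have hgle : g (s+t) - g s ≤ 2 * K := by
      have hdiff : g (s+t) - g s =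
          2*μ*t + (2*a/b) * Real.exp (-b*s) - (2*a/b) * Real.exp (-b*(s+t)) := by
        rw [hgdef]; ring
      have h1 : 0 ≤ 2*a/b * Real.exp (-b*(s+t)) := by positivity
      rw [hdiff, hK]
      have h2 : (2:ℝ) * (μ * t + a / b * Real.exp (-b * s)) =
          2*μ*t + (2*a/b) * Real.exp (-b*s) := by ring
      rw [h2]
      linarith
    calc φ (s+t) ≤ (x ⬝ᵥ x) * Real.exp (g (s+t) - g s) := hmono
      _ ≤ (x ⬝ᵥ x) * Real.exp (2*K) :=
          mul_le_mul_of_nonneg_left (Real.exp_le_exp.mpr hgle) (hdotnn x)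
  -- operator norm bound
  have hEle : ‖E s (s+t)‖ ≤ Real.exp K := by
    rw [Matrix.l2_opNorm_def]
    refine ContinuousLinearMap.opNorm_le_bound _ (Real.exp_nonneg K) (fun x' => ?_)
    set x : Fin r → ℝ := WithLp.equiv 2 (Fin r → ℝ) x' with hxdef
    have happ : (Matrix.toEuclideanLin.trans LinearMap.toContinuousLinearMap (E s (s+t))) x'
        = (WithLp.equiv 2 (Fin r → ℝ)).symm (E s (s+t) *ᵥ x) := by
      simp [Matrix.toEuclideanLin_apply, hxdef]
    rw [happ]
    have hxx : x ⬝ᵥ x = ‖x'‖ ^ 2 := by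
      rw [dot_sq x, hxdef]
      simp
    have hsq : ‖(WithLp.equiv 2 (Fin r → ℝ)).symm (E s (s+t) *ᵥ x)‖ ^ 2
        ≤ (Real.exp K * ‖x'‖) ^ 2 := by
      rw [← dot_sq]
      have h2 : (Real.exp K * ‖x'‖) ^ 2 = ‖x'‖^2 * Real.exp (2*K) := by
        have he : Real.exp K ^ 2 = Real.exp (2*K) := by
          rw [sq, ← Real.exp_add, two_mul]
        rw [mul_pow, he]
        ring
      rw [h2, ← hxx]
      exact key x
    have h3 : (0:ℝ) ≤ Real.exp K * ‖x'‖ := by positivity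
    calc ‖(WithLp.equiv 2 (Fin r → ℝ)).symm (E s (s+t) *ᵥ x)‖
        = Real.sqrt (‖(WithLp.equiv 2 (Fin r → ℝ)).symm (E s (s+t) *ᵥ x)‖ ^ 2) :=
          (Real.sqrt_sq (norm_nonneg _)).symm
      _ ≤ Real.sqrt ((Real.exp K * ‖x'‖) ^ 2) := Real.sqrt_le_sqrt hsq
      _ = Real.exp K * ‖x'‖ := Real.sqrt_sq h3
  -- positivity of the norm
  have hpos : 0 < ‖E s (s+t)‖ := by
    set x₀ : Fin r → ℝ := fun _ => 1 with hx₀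
    set L : ℝ := ‖Ainf‖ + a with hL
    set φ : ℝ → ℝ := fun v => (E s v *ᵥ x₀) ⬝ᵥ (E s v *ᵥ x₀) with hφdef
    set φ' : ℝ → ℝ := fun u => 2 * ((A u *ᵥ (E s u *ᵥ x₀)) ⬝ᵥ (E s u *ᵥ x₀)) with hφ'def
    have hlow : ∀ u ∈ Set.Icc s (s+t), -(φ' u) ≤ -(2*L) * (-(φ u)) := by
      intro u hu
      have hu0 : (0:ℝ) ≤ u := le_trans hs.le hu.1
      set y := E s u *ᵥ x₀ with hy
      have hyy : 0 ≤ y ⬝ᵥ y := hdotnn y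
      have hnormA : ‖A u‖ ≤ L := by
        have h1 : ‖A u‖ ≤ ‖A u - Ainf‖ + ‖Ainf‖ := by
          calc ‖A u‖ = ‖A u - Ainf + Ainf‖ := by rw [sub_add_cancel]
            _ ≤ ‖A u - Ainf‖ + ‖Ainf‖ := norm_add_le _ _
        have h2 : ‖A u - Ainf‖ ≤ a := by
          have := hA u hu0
          have hexp1 : Real.exp (-b*u) ≤ 1 := by
            rw [Real.exp_le_one_iff]
            nlinarith
          nlinarith
        linarith
      have habs := quad_abs_le (A u) y
      have hbound : -(L * (y ⬝ᵥ y)) ≤ y ⬝ᵥ (A u *ᵥ y) := by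
        have h4 : ‖A u‖ * (y ⬝ᵥ y) ≤ L * (y ⬝ᵥ y) := mul_le_mul_of_nonneg_right hnormA hyy
        have h5 := neg_abs_le (y ⬝ᵥ (A u *ᵥ y))
        linarith
      have hexp : φ' u = 2 * (y ⬝ᵥ (A u *ᵥ y)) := by
        rw [hφ'def]
        simp only [← hy, dotProduct_comm (A u *ᵥ y) y]
      rw [hexp]
      have hφu : φ u = y ⬝ᵥ y := rfl
      rw [hφu]
      nlinarith
    have hgr := gronwall_aux (fun v => -(φ v)) (fun v => -(2*L)*v)
      (fun u => -(φ' u)) (fun _ => -(2*L)) s (s+t) (by linarith)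
      (fun u _ => (hφderiv x₀ u).neg)
      (fun u _ => by simpa using (hasDerivAt_id u).const_mul (-(2*L)))
      hlow
    simp only [neg_mul, neg_neg] at hgr
    have hφs : φ s = x₀ ⬝ᵥ x₀ := by simp [hφdef, hE0 s, Matrix.one_mulVec]
    have hx₀pos : 0 < x₀ ⬝ᵥ x₀ := by
      have : x₀ ⬝ᵥ x₀ = (r : ℝ) := by
        simp [hx₀, dotProduct]
      rw [this]
      exact_mod_cast Nat.pos_of_ne_zero (NeZero.ne r)
    have hφTpos : 0 < φ (s+t) := by
      have he1 := Real.exp_pos (2*L*(s+t))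
      have he2 := Real.exp_pos (2*L*s)
      rw [hφs] at hgr
      nlinarith
    -- hence E s (s+t) ≠ 0, so its norm is positive
    by_contra hcon
    push_neg at hcon
    have hE0' : ‖E s (s+t)‖ = 0 := le_antisymm hcon (norm_nonneg _)
    have hvle := (E s (s+t)).l2_opNorm_mulVec ((WithLp.equiv 2 (Fin r → ℝ)).symm x₀)
    rw [hE0', zero_mul] at hvle
    have hvnorm : ‖(WithLp.equiv 2 (Fin r → ℝ)).symm (E s (s+t) *ᵥ x₀)‖ ^ 2 = φ (s+t) :=
      (dot_sq _).symm
    have : ‖(WithLp.equiv 2 (Fin r → ℝ)).symm (E s (s+t) *ᵥ x₀)‖ ≤ 0 := by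
      simpa using hvle
    nlinarith [norm_nonneg ((WithLp.equiv 2 (Fin r → ℝ)).symm (E s (s+t) *ᵥ x₀))]
  -- conclude
  have hlog : Real.log ‖E s (s+t)‖ ≤ K := (Real.log_le_iff_le_exp hpos).mpr hEle
  have h1t : (0:ℝ) ≤ 1/t := by positivity
  have hmul := mul_le_mul_of_nonneg_left hlog h1t
  calc (1/t) * Real.log ‖E s (s+t)‖ ≤ (1/t) * K := hmul
    _ = μ + (a/b) * Real.exp (-b*s) / t := by
        rw [hK]
        field_simp
end

section
/- Let E_{s,t}(A) be the state transition matrix of a flow A with ‖A_u‖ ≤ γ for all u. Then for s ≤ t, E_{s,t}(A)ᵀ E_{s,t}(A) ≥ e^{−2γ(t−s)} Id in the Loewner order. -/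
open Matrix
open scoped Matrix.Norms.L2Operator

/-- Loewner order on real square matrices: `M ≤ N` iff `N - M` is positive semidefinite. -/
def loewnerLE {r : ℕ} (M N : Matrix (Fin r) (Fin r) ℝ) : Prop :=
  (N - M).PosSemidef

lemma key_quad {r : ℕ} (A : Matrix (Fin r) (Fin r) ℝ) (γ : ℝ) (hA : ‖A‖ ≤ γ) (w : Fin r → ℝ) :
    |(A *ᵥ w) ⬝ᵥ w| ≤ γ * (w ⬝ᵥ w) := by
  have hw : ∀ (a b : Fin r → ℝ),
      a ⬝ᵥ b = inner ℝ ((EuclideanSpace.equiv (Fin r) ℝ).symm a)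
        ((EuclideanSpace.equiv (Fin r) ℝ).symm b) := by
    intro a b
    simp [PiLp.inner_apply, dotProduct, RCLike.inner_apply, mul_comm]
  set w' := (EuclideanSpace.equiv (Fin r) ℝ).symm w with hw'
  have h1 : |(A *ᵥ w) ⬝ᵥ w| ≤ ‖(EuclideanSpace.equiv (Fin r) ℝ).symm (A *ᵥ w)‖ * ‖w'‖ := by
    rw [hw]
    exact abs_real_inner_le_norm _ _
  have h2 : ‖(EuclideanSpace.equiv (Fin r) ℝ).symm (A *ᵥ w)‖ ≤ γ * ‖w'‖ := by
    calc ‖(EuclideanSpace.equiv (Fin r) ℝ).symm (A *ᵥ w)‖ ≤ ‖A‖ * ‖w'‖ := A.l2_opNorm_mulVec w'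
    _ ≤ γ * ‖w'‖ := mul_le_mul_of_nonneg_right hA (norm_nonneg _)
  have h3 : w ⬝ᵥ w = ‖w'‖ * ‖w'‖ := by rw [hw, real_inner_self_eq_norm_mul_norm]
  calc |(A *ᵥ w) ⬝ᵥ w| ≤ (γ * ‖w'‖) * ‖w'‖ :=
        h1.trans (mul_le_mul_of_nonneg_right h2 (norm_nonneg _))
  _ = γ * (w ⬝ᵥ w) := by rw [h3]; ring

lemma dot_self_deriv {r : ℕ} (v : ℝ → (Fin r → ℝ)) (v' : Fin r → ℝ) (u : ℝ)
    (hv : HasDerivAt v v' u) :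
    HasDerivAt (fun u => v u ⬝ᵥ v u) (2 * (v' ⬝ᵥ v u)) u := by
  have hvi : ∀ i, HasDerivAt (fun u => v u i) (v' i) u := fun i => hasDerivAt_pi.mp hv i
  have h : HasDerivAt (fun u => ∑ i, v u i * v u i)
      (∑ i, (v' i * v u i + v u i * v' i)) u :=
    HasDerivAt.fun_sum fun i _ => (hvi i).mul (hvi i)
  have heq : (∑ i, (v' i * v u i + v u i * v' i)) = 2 * (v' ⬝ᵥ v u) := by
    rw [dotProduct, Finset.mul_sum]
    exact Finset.sum_congr rfl fun i _ => by ring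
  rw [heq] at h
  exact h

/-- if `‖A_u‖ ≤ γ` for all `u`, then the state transition matrix
satisfies `E_{s,t}ᵀ E_{s,t} ≥ e^{−2γ(t−s)} Id` in the Loewner order, for `s ≤ t`. -/
theorem transition_gram_lower_bound {r : ℕ} [NeZero r]
    (A : ℝ → Matrix (Fin r) (Fin r) ℝ) (γ : ℝ)
    (hA : ∀ u, ‖A u‖ ≤ γ)
    (E : ℝ → ℝ → Matrix (Fin r) (Fin r) ℝ)
    (hE0 : ∀ s, E s s = 1)
    (hE : ∀ s t, HasDerivAt (fun u => E s u) (A t * E s t) t) :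
    ∀ s t : ℝ, s ≤ t →
      loewnerLE (Real.exp (-2 * γ * (t - s)) • (1 : Matrix (Fin r) (Fin r) ℝ))
        ((E s t)ᵀ * E s t) := by
  intro s t hst
  have hγ : 0 ≤ γ := (norm_nonneg (A 0)).trans (hA 0)
  have main : ∀ x : Fin r → ℝ,
      Real.exp (-2 * γ * (t - s)) * (x ⬝ᵥ x) ≤ (E s t *ᵥ x) ⬝ᵥ (E s t *ᵥ x) := by
    intro x
    set v : ℝ → (Fin r → ℝ) := fun u => E s u *ᵥ x with hvdef
    have hv : ∀ u, HasDerivAt v (A u *ᵥ v u) u := by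
      intro u
      let lin : Matrix (Fin r) (Fin r) ℝ →ₗ[ℝ] (Fin r → ℝ) :=
        { toFun := (· *ᵥ x), map_add' := fun M N => Matrix.add_mulVec M N x,
          map_smul' := fun c M => smul_mulVec c M x }
      have h := lin.toContinuousLinearMap.hasFDerivAt.comp_hasDerivAt u (hE s u)
      have hco : ∀ M : Matrix (Fin r) (Fin r) ℝ, lin.toContinuousLinearMap M = M *ᵥ x :=
        fun M => rfl
      simp only [Function.comp_def, hco] at h
      have heq : A u *ᵥ v u = (A u * E s u) *ᵥ x := by
        simp [hvdef, Matrix.mulVec_mulVec]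
      rw [heq]; exact h
    set f : ℝ → ℝ := fun u => v u ⬝ᵥ v u with hfdef
    have hf : ∀ u, HasDerivAt f (2 * ((A u *ᵥ v u) ⬝ᵥ v u)) u :=
      fun u => dot_self_deriv v (A u *ᵥ v u) u (hv u)
    set g : ℝ → ℝ := fun u => Real.exp (2 * γ * u) * f u with hgdef
    have hg : ∀ u, HasDerivAt g
        (Real.exp (2 * γ * u) * (2 * γ) * f u
          + Real.exp (2 * γ * u) * (2 * ((A u *ᵥ v u) ⬝ᵥ v u))) u := by
      intro u
      have h1 : HasDerivAt (fun u => Real.exp (2 * γ * u)) (Real.exp (2 * γ * u) * (2 * γ)) u := by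
        have := ((hasDerivAt_id u).const_mul (2 * γ)).exp
        simpa using this
      exact h1.mul (hf u)
    have hmono : Monotone g := by
      apply monotone_of_deriv_nonneg
      · exact fun u => (hg u).differentiableAt
      · intro u
        rw [(hg u).deriv]
        have key := abs_le.mp (key_quad (A u) γ (hA u) (v u))
        have hvv : 0 ≤ v u ⬝ᵥ v u := Finset.sum_nonneg fun i _ => mul_self_nonneg _
        have hfu : f u = v u ⬝ᵥ v u := rfl
        nlinarith [Real.exp_pos (2 * γ * u), key.1, key.2]
    have hgs : g s = Real.exp (2 * γ * s) * (x ⬝ᵥ x) := by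
      simp only [hgdef, hfdef, hvdef, hE0 s, Matrix.one_mulVec]
    have hle := hmono hst
    rw [hgs] at hle
    have hexp : Real.exp (-2 * γ * (t - s)) * (x ⬝ᵥ x)
        = Real.exp (-(2 * γ * t)) * (Real.exp (2 * γ * s) * (x ⬝ᵥ x)) := by
      rw [← mul_assoc, ← Real.exp_add]
      ring_nf
    rw [hexp]
    calc Real.exp (-(2 * γ * t)) * (Real.exp (2 * γ * s) * (x ⬝ᵥ x))
        ≤ Real.exp (-(2 * γ * t)) * g t :=
          mul_le_mul_of_nonneg_left hle (le_of_lt (Real.exp_pos _))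
    _ = f t := by
        rw [hgdef, ← mul_assoc, ← Real.exp_add]
        simp
    _ = (E s t *ᵥ x) ⬝ᵥ (E s t *ᵥ x) := rfl
  refine Matrix.PosSemidef.of_dotProduct_mulVec_nonneg ?_ ?_
  · have h1 : ((E s t)ᵀ * E s t).IsHermitian := by
      have := isHermitian_conjTranspose_mul_self (E s t)
      simpa [Matrix.conjTranspose_eq_transpose_of_trivial] using this
    have h2 : (Real.exp (-2 * γ * (t - s)) • (1 : Matrix (Fin r) (Fin r) ℝ)).IsHermitian := by
      simp [Matrix.IsHermitian]
    exact h1.sub h2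
  · intro x
    have hx : star x = x := by simp
    rw [hx, Matrix.sub_mulVec, dotProduct_sub, Matrix.smul_mulVec, Matrix.one_mulVec,
      dotProduct_smul, ← Matrix.mulVec_mulVec, Matrix.dotProduct_mulVec, Matrix.vecMul_transpose]
    have := main x
    simp only [smul_eq_mul]
    linarith
end
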